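/- Let (μ_n^θ)_{n≥1,θ∈Θ} and (μ^θ)_{θ∈Θ} be Borel probability measures on ℝ₊^d. Suppose that for every z ∈ ℝ₊^d, sup_θ |∫ e^{−⟨z,x⟩} dμ_n^θ(x) − ∫ e^{−⟨z,x⟩} dμ^θ(x)| → 0 as n → ∞, and for each ε>0 there exists R>0 with sup_θ μ^θ({|x| > R}) < ε. Then μ_n^θ converges weakly to μ^θ uniformly on Θ, i.e. sup_θ |∫ f dμ_n^θ − ∫ f dμ^θ| → 0 for every bounded continuous f: ℝ^d → ℝ. -/

import Mathlib

/-!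
The integrals against the kernels `x ↦ exp (-⟨m, x⟩)`, `m ≥ 0`, converge uniformly in `θ`, hence
so do the integrals of every function in the algebra these kernels span. The map
`x ↦ (exp (-xₖ))ₖ` embeds the orthant into the unit cube, on which the coordinates pull back to
kernels; by Stone–Weierstrass the algebra is therefore uniformly dense among the functions
`x ↦ f (min xₖ L)ₖ` with `f` continuous.

A bounded continuous `f` differs from this truncation only where some `xₖ > L`, and that set has
small mass uniformly in `θ` and in large `n`: for `ν θ` by tightness, and for `μ n θ` because, by
Markov's inequality, its mass is controlled by `1 - ∫ exp (-t ∑ xₖ) dμ n θ`, which is uniformly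
close to the same quantity for `ν θ`, itself small for small `t` by tightness.
-/

open MeasureTheory Filter BoundedContinuousFunction

lemma tendstoUniformly_of_forall_approx {ι Θ α : Type*} [PseudoMetricSpace α] {l : Filter ι}
    {F : ι → Θ → α} {G : Θ → α}
    (h : ∀ δ > 0, ∃ (F' : ι → Θ → α) (G' : Θ → α), TendstoUniformly F' G' l ∧
      (∀ᶠ i in l, ∀ θ, dist (F i θ) (F' i θ) ≤ δ) ∧ ∀ θ, dist (G θ) (G' θ) ≤ δ) :
    TendstoUniformly F G l := by
  rw [Metric.tendstoUniformly_iff]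
  intro ε hε
  obtain ⟨F', G', hconv, hF, hG⟩ := h (ε / 3) (by positivity)
  filter_upwards [Metric.tendstoUniformly_iff.1 hconv (ε / 3) (by positivity), hF]
    with i hconv_i hF_i θ
  have := dist_triangle4 (G θ) (G' θ) (F' i θ) (F i θ)
  linarith [hG θ, hconv_i θ, dist_comm (F i θ) (F' i θ) ▸ hF_i θ]

lemma tendstoUniformly_atTop_iff_abs_sub_lt {ι Θ : Type*} [SemilatticeSup ι] [Nonempty ι]
    {F : ι → Θ → ℝ} {G : Θ → ℝ} :
    TendstoUniformly F G atTop ↔ ∀ ε > 0, ∃ N, ∀ n ≥ N, ∀ θ, |F n θ - G θ| < ε := by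
  simp only [Metric.tendstoUniformly_iff, eventually_atTop, Real.dist_eq, abs_sub_comm (G _)]

section UniformIntegralConvergence

variable {X ι Θ : Type*} [MeasurableSpace X]

def uniformIntegralConvergence (μ : ι → Θ → Measure X) (ν : Θ → Measure X) (l : Filter ι) :
    Submodule ℝ (X → ℝ) where
  carrier := {g | (∀ i θ, Integrable g (μ i θ)) ∧ (∀ θ, Integrable g (ν θ)) ∧
    TendstoUniformly (fun i θ => ∫ x, g x ∂μ i θ) (fun θ => ∫ x, g x ∂ν θ) l}
  add_mem' := by
    rintro g h ⟨hgμ, hgν, hg⟩ ⟨hhμ, hhν, hh⟩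
    refine ⟨fun i θ => (hgμ i θ).add (hhμ i θ), fun θ => (hgν θ).add (hhν θ), ?_⟩
    convert hg.add hh using 1
    · ext i θ; exact integral_add (hgμ i θ) (hhμ i θ)
    · ext θ; exact integral_add (hgν θ) (hhν θ)
  zero_mem' := by
    refine ⟨fun _ _ => integrable_zero _ _ _, fun _ => integrable_zero _ _ _, ?_⟩
    simpa only [Pi.zero_apply, integral_zero] using tendsto_const_nhds.tendstoUniformly_const
  smul_mem' := by
    rintro c g ⟨hgμ, hgν, hg⟩
    refine ⟨fun i θ => (hgμ i θ).smul c, fun θ => (hgν θ).smul c, ?_⟩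
    simpa only [Pi.smul_apply, integral_smul, Function.comp_def] using
      (uniformContinuous_const_smul c).comp_tendstoUniformly hg

variable {μ : ι → Θ → Measure X} {ν : Θ → Measure X} {l : Filter ι}

lemma dist_integral_le_of_forall_dist_le {κ : Measure X} [IsProbabilityMeasure κ] {g h : X → ℝ}
    (hg : Integrable g κ) (hh : Integrable h κ) {δ : ℝ} (hgh : ∀ x, dist (g x) (h x) ≤ δ) :
    dist (∫ x, g x ∂κ) (∫ x, h x ∂κ) ≤ δ := by
  rw [dist_eq_norm, ← integral_sub hg hh]
  calc _ ≤ δ * κ.real Set.univ :=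
        norm_integral_le_of_norm_le_const (ae_of_all _ fun x => dist_eq_norm (g x) (h x) ▸ hgh x)
    _ = δ := by simp

lemma mem_uniformIntegralConvergence_of_forall_near [∀ i θ, IsProbabilityMeasure (μ i θ)]
    [∀ θ, IsProbabilityMeasure (ν θ)] {g : X → ℝ} (hgμ : ∀ i θ, Integrable g (μ i θ))
    (hgν : ∀ θ, Integrable g (ν θ))
    (hnear : ∀ δ > 0, ∃ h ∈ uniformIntegralConvergence μ ν l, ∀ x, dist (g x) (h x) ≤ δ) :
    g ∈ uniformIntegralConvergence μ ν l := by
  refine ⟨hgμ, hgν, tendstoUniformly_of_forall_approx fun δ hδ => ?_⟩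
  obtain ⟨h, ⟨hhμ, hhν, hh⟩, hgh⟩ := hnear δ hδ
  exact ⟨_, _, hh, .of_forall fun i θ => dist_integral_le_of_forall_dist_le (hgμ i θ) (hhμ i θ) hgh,
    fun θ => dist_integral_le_of_forall_dist_le (hgν θ) (hhν θ) hgh⟩

end UniformIntegralConvergence

section OrthantExp

lemma ae_forall_nonneg_iff_measure_exists_neg {ι : Type*} {κ : Measure (ι → ℝ)} :
    (∀ᵐ x ∂κ, ∀ k, 0 ≤ x k) ↔ κ {x | ∃ k, x k < 0} = 0 := by
  simp [ae_iff]

variable {ι : Type*} [Fintype ι]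

/-- The Laplace kernel `x ↦ exp (-⟨m, x⟩)`, with `x` replaced by its positive part: this keeps it
bounded for `m ≥ 0` and does not change it on the orthant. -/
noncomputable def orthantExp (m x : ι → ℝ) : ℝ :=
  Real.exp (-∑ k, m k * max (x k) 0)

@[fun_prop]
lemma continuous_orthantExp (m : ι → ℝ) : Continuous (orthantExp m) := by
  unfold orthantExp; fun_prop

lemma orthantExp_pos (m x : ι → ℝ) : 0 < orthantExp m x :=
  Real.exp_pos _

lemma orthantExp_le_one {m : ι → ℝ} (hm : 0 ≤ m) (x : ι → ℝ) : orthantExp m x ≤ 1 := by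
  rw [orthantExp, Real.exp_le_one_iff, neg_nonpos]
  exact Finset.sum_nonneg fun k _ => mul_nonneg (hm k) (le_max_right _ _)

lemma orthantExp_zero : orthantExp (0 : ι → ℝ) = 1 := by
  ext x; simp [orthantExp]

lemma orthantExp_add (m m' : ι → ℝ) : orthantExp (m + m') = orthantExp m * orthantExp m' := by
  ext x
  simp only [orthantExp, Pi.mul_apply, Pi.add_apply, ← Real.exp_add, add_mul,
    Finset.sum_add_distrib, neg_add]

lemma integrable_orthantExp {κ : Measure (ι → ℝ)} [IsFiniteMeasure κ] {m : ι → ℝ} (hm : 0 ≤ m) :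
    Integrable (orthantExp m) κ := by
  refine (integrable_const (1 : ℝ)).mono' (continuous_orthantExp m).aestronglyMeasurable
    (ae_of_all _ fun x => ?_)
  rw [Real.norm_of_nonneg (orthantExp_pos m x).le]
  exact orthantExp_le_one hm x

lemma integral_orthantExp {κ : Measure (ι → ℝ)} (hκ : κ {x | ∃ k, x k < 0} = 0) (m : ι → ℝ) :
    ∫ x, orthantExp m x ∂κ = ∫ x, Real.exp (-∑ k, m k * x k) ∂κ := by
  refine integral_congr_ae ?_
  filter_upwards [ae_forall_nonneg_iff_measure_exists_neg.2 hκ] with x hx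
  simp only [orthantExp, max_eq_left (hx _)]

lemma integral_one_sub_orthantExp {κ : Measure (ι → ℝ)} [IsProbabilityMeasure κ] {m : ι → ℝ}
    (hm : 0 ≤ m) : ∫ x, (1 - orthantExp m x) ∂κ = 1 - ∫ x, orthantExp m x ∂κ := by
  rw [integral_sub (integrable_const 1) (integrable_orthantExp hm), integral_const, probReal_univ,
    one_smul]

variable (ι) in
def orthantExpSubmonoid : Submonoid ((ι → ℝ) → ℝ) where
  carrier := {g | ∃ m, 0 ≤ m ∧ orthantExp m = g}
  one_mem' := ⟨0, le_rfl, orthantExp_zero⟩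
  mul_mem' := by
    rintro _ _ ⟨m, hm, rfl⟩ ⟨m', hm', rfl⟩
    exact ⟨m + m', add_nonneg hm hm', orthantExp_add m m'⟩

lemma mem_orthantExpSubmonoid {g : (ι → ℝ) → ℝ} :
    g ∈ orthantExpSubmonoid ι ↔ ∃ m, 0 ≤ m ∧ orthantExp m = g :=
  Iff.rfl

variable (ι) in
noncomputable def orthantExpAlgebra : Subalgebra ℝ ((ι → ℝ) → ℝ) :=
  Algebra.adjoin ℝ (orthantExpSubmonoid ι)

lemma orthantExpAlgebra_le_uniformIntegralConvergence {ι' Θ : Type*} {l : Filter ι'}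
    {μ : ι' → Θ → Measure (ι → ℝ)} {ν : Θ → Measure (ι → ℝ)}
    [∀ i θ, IsFiniteMeasure (μ i θ)] [∀ θ, IsFiniteMeasure (ν θ)]
    (hμ : ∀ i θ, μ i θ {x | ∃ k, x k < 0} = 0) (hν : ∀ θ, ν θ {x | ∃ k, x k < 0} = 0)
    (hLaplace : ∀ m : ι → ℝ, 0 ≤ m →
      TendstoUniformly (fun i θ => ∫ x, Real.exp (-∑ k, m k * x k) ∂μ i θ)
        (fun θ => ∫ x, Real.exp (-∑ k, m k * x k) ∂ν θ) l) :
    Subalgebra.toSubmodule (orthantExpAlgebra ι) ≤ uniformIntegralConvergence μ ν l := by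
  rw [orthantExpAlgebra, Algebra.adjoin_eq_span, Submonoid.closure_eq, Submodule.span_le]
  intro g hg
  obtain ⟨m, hm, rfl⟩ := mem_orthantExpSubmonoid.1 hg
  refine ⟨fun i θ => integrable_orthantExp hm, fun θ => integrable_orthantExp hm, ?_⟩
  simpa only [integral_orthantExp (hμ _ _), integral_orthantExp (hν _)] using hLaplace m hm

end OrthantExp

section UnitCube

variable {ι : Type*}

/-- Embeds the orthant into the compact cube, where Stone–Weierstrass applies. -/
noncomputable def toUnitCube : C(ι → ℝ, Set.Icc (0 : ι → ℝ) 1) where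
  toFun x := ⟨fun k => Real.exp (-max (x k) 0), fun k => (Real.exp_pos _).le,
    fun k => Real.exp_le_one_iff.2 (neg_nonpos.2 (le_max_right _ _))⟩
  continuous_toFun := Continuous.subtype_mk (by fun_prop) _

def unitCubeCoord (k : ι) : C(Set.Icc (0 : ι → ℝ) 1, ℝ) :=
  ⟨fun y => (y : ι → ℝ) k, (continuous_apply k).comp continuous_subtype_val⟩

lemma unitCubeCoord_comp_toUnitCube [Fintype ι] [DecidableEq ι] (k : ι) :
    ⇑((unitCubeCoord k).comp toUnitCube) = orthantExp (Pi.single k 1) := by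
  ext x
  simp [unitCubeCoord, toUnitCube, orthantExp, Pi.single_apply]

lemma separatesPoints_adjoin_unitCubeCoord :
    (Algebra.adjoin ℝ (Set.range (unitCubeCoord (ι := ι)))).SeparatesPoints := by
  intro y y' hne
  obtain ⟨k, hk⟩ := Function.ne_iff.1 (Subtype.coe_ne_coe.2 hne)
  exact ⟨unitCubeCoord k, ⟨unitCubeCoord k, Algebra.subset_adjoin ⟨k, rfl⟩, rfl⟩, hk⟩

lemma comp_toUnitCube_mem_orthantExpAlgebra [Fintype ι] {p : C(Set.Icc (0 : ι → ℝ) 1, ℝ)}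
    (hp : p ∈ Algebra.adjoin ℝ (Set.range unitCubeCoord)) :
    ⇑(p.comp toUnitCube) ∈ orthantExpAlgebra ι := by
  classical
  let Φ : C(Set.Icc (0 : ι → ℝ) 1, ℝ) →ₐ[ℝ] (ι → ℝ) → ℝ :=
    (ContinuousMap.coeFnAlgHom ℝ).comp (ContinuousMap.compRightAlgHom ℝ ℝ toUnitCube)
  have hΦp : Φ p ∈ Algebra.adjoin ℝ (Φ '' Set.range unitCubeCoord) := by
    rw [← AlgHom.map_adjoin]
    exact Subalgebra.mem_map.2 ⟨p, hp, rfl⟩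
  refine Algebra.adjoin_mono ?_ hΦp
  rintro _ ⟨_, ⟨k, rfl⟩, rfl⟩
  exact ⟨Pi.single k 1, Pi.single_nonneg.2 zero_le_one, (unitCubeCoord_comp_toUnitCube k).symm⟩

def orthantTruncate (L : ℝ) : C(ι → ℝ, ι → ℝ) :=
  ⟨fun x k => min (max (x k) 0) L, by fun_prop⟩

lemma neg_log_max_exp_neg_exp_neg (a L : ℝ) :
    -Real.log (max (Real.exp (-a)) (Real.exp (-L))) = min a L := by
  rw [← Real.exp_monotone.map_max, Real.log_exp, max_neg_neg, neg_neg]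

lemma exists_mem_orthantExpAlgebra_near_comp_orthantTruncate [Fintype ι] {f : (ι → ℝ) → ℝ}
    (hf : Continuous f) (L : ℝ) {δ : ℝ} (hδ : 0 < δ) :
    ∃ g ∈ orthantExpAlgebra ι, ∀ x, dist (f (orthantTruncate L x)) (g x) ≤ δ := by
  -- `f ∘ orthantTruncate L` is constant once a coordinate exceeds `L`, so it extends continuously
  -- from the image of `toUnitCube` to the whole cube.
  set h : Set.Icc (0 : ι → ℝ) 1 → ℝ :=
    fun y => f fun k => -Real.log (max ((y : ι → ℝ) k) (Real.exp (-L)))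
  have hh : Continuous h := hf.comp <| continuous_pi fun k =>
    (((unitCubeCoord k).continuous.max continuous_const).log fun _ =>
      ((Real.exp_pos _).trans_le (le_max_right _ _)).ne').neg
  have h_toUnitCube (x : ι → ℝ) : h (toUnitCube x) = f (orthantTruncate L x) := by
    simp only [h, toUnitCube, orthantTruncate, ContinuousMap.coe_mk, neg_log_max_exp_neg_exp_neg]
  obtain ⟨p, hp⟩ := ContinuousMap.exists_mem_subalgebra_near_continuous_of_separatesPoints _
    separatesPoints_adjoin_unitCubeCoord h hh δ hδ
  refine ⟨_, comp_toUnitCube_mem_orthantExpAlgebra p.2, fun x => ?_⟩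
  rw [← h_toUnitCube, dist_comm, dist_eq_norm]
  exact (hp _).le

end UnitCube

section Tightness

variable {ι : Type*} [Fintype ι]

lemma one_sub_exp_mul_measureReal_le_one_sub_integral_orthantExp {κ : Measure (ι → ℝ)}
    [IsProbabilityMeasure κ] {t L : ℝ} (ht : 0 ≤ t) (hL : 0 ≤ L) :
    (1 - Real.exp (-(t * L))) * κ.real {x | ∃ k, L < x k} ≤
      1 - ∫ x, orthantExp (fun _ => t) x ∂κ := by
  have hm : (0 : ι → ℝ) ≤ fun _ => t := fun _ => ht
  have hsub : {x : ι → ℝ | ∃ k, L < x k} ⊆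
      {x | 1 - Real.exp (-(t * L)) ≤ 1 - orthantExp (fun _ => t) x} := by
    rintro x ⟨k, hk⟩
    simp only [Set.mem_ofPred_eq, sub_le_sub_iff_left, orthantExp, Real.exp_le_exp, neg_le_neg_iff]
    calc t * L ≤ t * max (x k) 0 := mul_le_mul_of_nonneg_left (hk.le.trans (le_max_left _ _)) ht
      _ ≤ ∑ j, t * max (x j) 0 := Finset.single_le_sum (f := fun j => t * max (x j) 0)
          (fun j _ => mul_nonneg ht (le_max_right _ _)) (Finset.mem_univ k)
  have hexp_le : Real.exp (-(t * L)) ≤ 1 :=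
    Real.exp_le_one_iff.2 (neg_nonpos.2 (mul_nonneg ht hL))
  calc (1 - Real.exp (-(t * L))) * κ.real {x | ∃ k, L < x k}
      ≤ (1 - Real.exp (-(t * L))) *
          κ.real {x | 1 - Real.exp (-(t * L)) ≤ 1 - orthantExp (fun _ => t) x} :=
        mul_le_mul_of_nonneg_left (measureReal_mono hsub) (sub_nonneg.2 hexp_le)
    _ ≤ ∫ x, (1 - orthantExp (fun _ => t) x) ∂κ :=
        mul_meas_ge_le_integral_of_nonneg
          (ae_of_all _ fun x => sub_nonneg.2 (orthantExp_le_one hm x))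
          ((integrable_const 1).sub (integrable_orthantExp hm)) _
    _ = 1 - ∫ x, orthantExp (fun _ => t) x ∂κ := integral_one_sub_orthantExp hm

lemma one_sub_integral_orthantExp_le {κ : Measure (ι → ℝ)} [IsProbabilityMeasure κ] {t R : ℝ}
    (ht : 0 ≤ t) (hR : 0 ≤ R) :
    1 - ∫ x, orthantExp (fun _ => t) x ∂κ ≤ κ.real {x | R < ‖x‖} + t * Fintype.card ι * R := by
  have hm : (0 : ι → ℝ) ≤ fun _ => t := fun _ => ht
  have hmeas : MeasurableSet {x : ι → ℝ | R < ‖x‖} :=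
    (isOpen_lt continuous_const continuous_norm).measurableSet
  have hpointwise (x : ι → ℝ) :
      1 - orthantExp (fun _ => t) x ≤ {x | R < ‖x‖}.indicator 1 x + t * Fintype.card ι * R := by
    by_cases hx : R < ‖x‖
    · rw [Set.indicator_of_mem (s := {x | R < ‖x‖}) hx, Pi.one_apply]
      have := orthantExp_pos (fun _ => t) x
      have : 0 ≤ t * Fintype.card ι * R := by positivity
      linarith
    · rw [Set.indicator_of_notMem (s := {x | R < ‖x‖}) hx, zero_add]
      calc 1 - orthantExp (fun _ => t) x ≤ ∑ k, t * max (x k) 0 := by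
            simp only [orthantExp]
            linarith [Real.one_sub_le_exp_neg (∑ k, t * max (x k) 0)]
        _ ≤ ∑ _k : ι, t * R := Finset.sum_le_sum fun k _ => mul_le_mul_of_nonneg_left
            (max_le ((le_abs_self _).trans ((norm_le_pi_norm x k).trans (not_lt.1 hx))) hR) ht
        _ = t * Fintype.card ι * R := by
            rw [Finset.sum_const, Finset.card_univ, nsmul_eq_mul]; ring
  calc 1 - ∫ x, orthantExp (fun _ => t) x ∂κ = ∫ x, (1 - orthantExp (fun _ => t) x) ∂κ :=
        (integral_one_sub_orthantExp hm).symm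
    _ ≤ ∫ x, ({x | R < ‖x‖}.indicator 1 x + t * Fintype.card ι * R) ∂κ :=
        integral_mono ((integrable_const 1).sub (integrable_orthantExp hm))
          (((integrable_const 1).indicator hmeas).add (integrable_const _)) hpointwise
    _ = κ.real {x | R < ‖x‖} + t * Fintype.card ι * R := by
        rw [integral_add ((integrable_const 1).indicator hmeas) (integrable_const _),
          integral_indicator_one hmeas]
        simp

end Tightness

section UniformContinuityTheorem

variable {ι ι' Θ : Type*} [Fintype ι] {l : Filter ι'} {μ : ι' → Θ → Measure (ι → ℝ)}
  {ν : Θ → Measure (ι → ℝ)}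

lemma exists_eventually_measureReal_exists_lt_le [∀ i θ, IsProbabilityMeasure (μ i θ)]
    [∀ θ, IsProbabilityMeasure (ν θ)]
    (hLaplace : ∀ t : ℝ, 0 ≤ t → TendstoUniformly
      (fun i θ => ∫ x, orthantExp (fun _ => t) x ∂μ i θ)
      (fun θ => ∫ x, orthantExp (fun _ => t) x ∂ν θ) l)
    (htight : ∀ δ > 0, ∃ R, ∀ θ, (ν θ).real {x | R < ‖x‖} ≤ δ) {δ : ℝ} (hδ : 0 < δ) :
    ∃ L, (∀ᶠ i in l, ∀ θ, (μ i θ).real {x | ∃ k, L < x k} ≤ δ) ∧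
      ∀ θ, (ν θ).real {x | ∃ k, L < x k} ≤ δ := by
  obtain ⟨R₀, hR₀⟩ := htight (δ / 6) (by positivity)
  set R := max R₀ 0
  have hR : 0 ≤ R := le_max_right _ _
  have hνR (θ : Θ) : (ν θ).real {x | R < ‖x‖} ≤ δ / 6 :=
    (measureReal_mono fun x hx => (le_max_left R₀ 0).trans_lt hx).trans (hR₀ θ)
  -- Small enough that `1 - exp (-t ∑ xₖ⁺) ≤ δ / 6` on the ball of radius `R`.
  set t := δ / 6 / (Fintype.card ι * R + 1)
  have ht : 0 < t := by positivity
  have htR : t * Fintype.card ι * R ≤ δ / 6 := by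
    rw [mul_assoc, div_mul_eq_mul_div, div_le_iff₀ (by positivity)]
    nlinarith
  set L := max R t⁻¹
  have hL : 0 ≤ L := hR.trans (le_max_left _ _)
  have hexp : 1 / 2 ≤ 1 - Real.exp (-(t * L)) := by
    have : 1 ≤ t * L := (mul_inv_cancel₀ ht.ne').symm.le.trans
      (mul_le_mul_of_nonneg_left (le_max_right _ _) ht.le)
    linarith [Real.exp_le_exp.2 (neg_le_neg this), Real.exp_neg_one_lt_half]
  have hsub : {x : ι → ℝ | ∃ k, L < x k} ⊆ {x | R < ‖x‖} := by
    rintro x ⟨k, hk⟩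
    exact (le_max_left R _).trans_lt (hk.trans_le ((le_abs_self _).trans (norm_le_pi_norm x k)))
  refine ⟨L, ?_, fun θ => (measureReal_mono hsub).trans ((hνR θ).trans (by linarith))⟩
  filter_upwards [Metric.tendstoUniformly_iff.1 (hLaplace t ht.le) (δ / 6) (by positivity)]
    with i hi θ
  have hνθ := one_sub_integral_orthantExp_le (κ := ν θ) ht.le hR
  have hμθ := one_sub_exp_mul_measureReal_le_one_sub_integral_orthantExp (κ := μ i θ) ht.le hL
  have hiθ := (abs_lt.1 (Real.dist_eq _ _ ▸ hi θ)).2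
  nlinarith [hνR θ, measureReal_nonneg (μ := μ i θ) (s := {x | ∃ k, L < x k})]

lemma dist_integral_integral_comp_orthantTruncate_le {ρ : Measure (ι → ℝ)} [IsFiniteMeasure ρ]
    (hρ : ρ {x | ∃ k, x k < 0} = 0) (f : (ι → ℝ) →ᵇ ℝ) (L : ℝ) :
    dist (∫ x, f x ∂ρ) (∫ x, f (orthantTruncate L x) ∂ρ) ≤
      2 * ‖f‖ * ρ.real {x | ∃ k, L < x k} := by
  rw [dist_eq_norm, ← integral_sub (f.integrable ρ) (g := fun x => f (orthantTruncate L x))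
    ((f.compContinuous (orthantTruncate L)).integrable ρ),
    ← setIntegral_eq_integral_of_ae_compl_eq_zero]
  · exact norm_setIntegral_le_of_norm_le_const (measure_lt_top _ _)
      fun x _ => dist_eq_norm (f x) _ ▸ f.dist_le_two_norm _ _
  · filter_upwards [ae_forall_nonneg_iff_measure_exists_neg.2 hρ] with x hx hxL
    push Not at hxL
    have : orthantTruncate L x = x := by
      ext k
      change min (max (x k) 0) L = x k
      rw [max_eq_left (hx k), min_eq_left (hxL k)]
    rw [this, sub_self]

theorem tendstoUniformly_integral_of_tendstoUniformly_laplace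
    [∀ i θ, IsProbabilityMeasure (μ i θ)] [∀ θ, IsProbabilityMeasure (ν θ)]
    (hμ : ∀ i θ, μ i θ {x | ∃ k, x k < 0} = 0) (hν : ∀ θ, ν θ {x | ∃ k, x k < 0} = 0)
    (hLaplace : ∀ m : ι → ℝ, 0 ≤ m →
      TendstoUniformly (fun i θ => ∫ x, Real.exp (-∑ k, m k * x k) ∂μ i θ)
        (fun θ => ∫ x, Real.exp (-∑ k, m k * x k) ∂ν θ) l)
    (htight : ∀ δ > 0, ∃ R, ∀ θ, (ν θ).real {x | R < ‖x‖} ≤ δ) (f : (ι → ℝ) →ᵇ ℝ) :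
    TendstoUniformly (fun i θ => ∫ x, f x ∂μ i θ) (fun θ => ∫ x, f x ∂ν θ) l := by
  have hexp := orthantExpAlgebra_le_uniformIntegralConvergence hμ hν hLaplace
  have htrunc (L : ℝ) : (fun x => f (orthantTruncate L x)) ∈ uniformIntegralConvergence μ ν l :=
    mem_uniformIntegralConvergence_of_forall_near
      (fun _ _ => (f.compContinuous (orthantTruncate L)).integrable _)
      (fun _ => (f.compContinuous (orthantTruncate L)).integrable _) fun δ hδ =>
      have ⟨g, hg, hfg⟩ := exists_mem_orthantExpAlgebra_near_comp_orthantTruncate f.continuous L hδ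
      ⟨g, hexp hg, hfg⟩
  refine tendstoUniformly_of_forall_approx fun δ hδ => ?_
  obtain ⟨L, hμL, hνL⟩ := exists_eventually_measureReal_exists_lt_le
    (fun t ht => (hexp (Algebra.subset_adjoin ⟨_, fun _ => ht, rfl⟩)).2.2) htight
    (δ := δ / (2 * ‖f‖ + 1)) (by positivity)
  have hbound {ρ : Measure (ι → ℝ)} [IsFiniteMeasure ρ] (hρ : ρ {x | ∃ k, x k < 0} = 0)
      (hρL : ρ.real {x | ∃ k, L < x k} ≤ δ / (2 * ‖f‖ + 1)) :
      dist (∫ x, f x ∂ρ) (∫ x, f (orthantTruncate L x) ∂ρ) ≤ δ := by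
    refine (dist_integral_integral_comp_orthantTruncate_le hρ f L).trans ?_
    rw [le_div_iff₀ (by positivity)] at hρL
    nlinarith [norm_nonneg f, measureReal_nonneg (μ := ρ) (s := {x | ∃ k, L < x k})]
  exact ⟨_, _, (htrunc L).2.2, hμL.mono fun i hi θ => hbound (hμ i θ) (hi θ),
    fun θ => hbound (hν θ) (hνL θ)⟩

end UniformContinuityTheorem

/-- Uniform continuity theorem for Laplace transforms on the nonnegative orthant:
uniform convergence of Laplace transforms plus uniform tightness of the limit family
implies uniform weak convergence. -/
theorem stmt5
    {d : ℕ} {Θ : Type*}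
    (μ : ℕ → Θ → Measure (Fin d → ℝ)) (ν : Θ → Measure (Fin d → ℝ))
    (hμ : ∀ n θ, IsProbabilityMeasure (μ n θ)) (hν : ∀ θ, IsProbabilityMeasure (ν θ))
    (hμsupp : ∀ n θ, (μ n θ) {x | ∃ k, x k < 0} = 0)
    (hνsupp : ∀ θ, (ν θ) {x | ∃ k, x k < 0} = 0)
    (hLaplace : ∀ z : Fin d → ℝ, (∀ k, 0 ≤ z k) →
      ∀ ε > (0 : ℝ), ∃ N, ∀ n ≥ N, ∀ θ,
        |∫ x, Real.exp (-(∑ k, z k * x k)) ∂(μ n θ)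
          - ∫ x, Real.exp (-(∑ k, z k * x k)) ∂(ν θ)| < ε)
    (htight : ∀ ε > (0 : ℝ), ∃ R : ℝ, ∀ θ,
      (ν θ) {x | ‖x‖ > R} < ENNReal.ofReal ε) :
    ∀ f : BoundedContinuousFunction (Fin d → ℝ) ℝ, ∀ ε > (0 : ℝ), ∃ N, ∀ n ≥ N, ∀ θ,
      |∫ x, f x ∂(μ n θ) - ∫ x, f x ∂(ν θ)| < ε := by
  have htight' (δ : ℝ) (hδ : 0 < δ) : ∃ R, ∀ θ, (ν θ).real {x | R < ‖x‖} ≤ δ :=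
    have ⟨R, hR⟩ := htight δ hδ
    ⟨R, fun θ => ENNReal.toReal_le_of_le_ofReal hδ.le (hR θ).le⟩
  exact fun f => tendstoUniformly_atTop_iff_abs_sub_lt.1 <|
    tendstoUniformly_integral_of_tendstoUniformly_laplace hμsupp hνsupp
      (fun m hm => tendstoUniformly_atTop_iff_abs_sub_lt.2 (hLaplace m hm)) htight' f
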